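/- If A is commutative, G is abelian and α ≡ 1, then the center of A ⋊_α^σ G equals { ∑_g r_g g̅ : r_s ∈ A^G and r_s(σ_s(a) − a) = 0 for all a ∈ A, s ∈ G }. -/
import Mathlib


/-- A `G`-crossed system `{A, G, σ, α}`: a unital ring `A`, a group `G`,
`σ : G → Aut(A)` and a `σ`-cocycle `α : G × G → U(A)` satisfying the
crossed-system axioms (i)-(iii). -/
structure CrossedSystem (A : Type*) [Ring A] (G : Type*) [Group G] where
  σ : G → RingAut A
  α : G → G → Aˣ
  compat : ∀ x y : G, ∀ a : A,
    σ x (σ y a) = (α x y : A) * σ (x * y) a * ((α x y)⁻¹ : Aˣ)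
  cocycle : ∀ x y z : G,
    (α x y : A) * (α (x * y) z : A) = σ x (α y z : A) * (α x (y * z) : A)
  unit_right : ∀ x : G, α x 1 = 1
  unit_left : ∀ x : G, α 1 x = 1

variable {A : Type*} [CommRing A] {G : Type*} [Group G]

/-- Multiplication of the crossed product `A ⋊_α^σ G`, realized on the free
left `A`-module `G →₀ A`: `(a x̄)(b ȳ) = a σ_x(b) α(x,y) (x*y)‾`. -/
noncomputable def cmul (C : CrossedSystem A G) (f g : G →₀ A) : G →₀ A :=
  f.sum fun s a => g.sum fun t b =>
    Finsupp.single (s * t) (a * C.σ s b * (C.α s t : A))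

/-- The element `1_A ē` of the crossed product. -/
noncomputable def cone : G →₀ A := Finsupp.single 1 1

/-- The canonical embedding `ι : A → A ⋊_α^σ G`, `a ↦ a ē`; its range is `Ã`. -/
noncomputable def cemb (a : A) : G →₀ A := Finsupp.single 1 a

/-- The commutant `Comm(Ã)` of the embedded base ring in the crossed product. -/
noncomputable def cCommutant (C : CrossedSystem A G) : Set (G →₀ A) :=
  {x | ∀ a : A, cmul C (cemb a) x = cmul C x (cemb a)}

/-- `I` is a (non-unital) two-sided ideal of the crossed product `A ⋊_α^σ G`. -/
def cIsIdeal (C : CrossedSystem A G) (I : Set (G →₀ A)) : Prop :=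
  0 ∈ I ∧ (∀ x ∈ I, ∀ y ∈ I, x + y ∈ I) ∧ (∀ x ∈ I, -x ∈ I) ∧
    (∀ x ∈ I, ∀ y : G →₀ A, cmul C y x ∈ I ∧ cmul C x y ∈ I)

lemma cmul_single_right (C : CrossedSystem A G) (hα : ∀ x y : G, C.α x y = 1)
    (r : G →₀ A) (t : G) (b : A) :
    cmul C r (Finsupp.single t b) =
      r.sum fun s a => Finsupp.single (s * t) (a * C.σ s b) := by
  unfold cmul
  refine Finsupp.sum_congr fun s _ => ?_
  rw [Finsupp.sum_single_index] <;> simp [hα]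

lemma cmul_single_left (C : CrossedSystem A G) (hG : ∀ x y : G, x * y = y * x)
    (hα : ∀ x y : G, C.α x y = 1) (r : G →₀ A) (t : G) (b : A) :
    cmul C (Finsupp.single t b) r =
      r.sum fun s a => Finsupp.single (s * t) (b * C.σ t a) := by
  unfold cmul
  rw [Finsupp.sum_single_index]
  · refine Finsupp.sum_congr fun s _ => ?_
    simp [hα, hG t s]
  · simp

lemma eval_sum (r : G →₀ A) (t s₀ : G) (F : G → A → A) (hF : F s₀ 0 = 0) :
    (r.sum fun s a => Finsupp.single (s * t) (F s a)) (s₀ * t) = F s₀ (r s₀) := by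
  classical
  rw [Finsupp.sum_apply, Finsupp.sum]
  rw [Finset.sum_congr rfl
    (fun a _ => Finsupp.single_apply (a := a * t) (a' := s₀ * t) (b := F a (r a)))]
  simp only [mul_left_inj]
  rw [Finset.sum_ite_eq' r.support s₀ (fun s => F s (r s))]
  by_cases h : s₀ ∈ r.support
  · simp [h]
  · simp [h, Finsupp.notMem_support_iff.mp h, hF]

theorem stmt_7 (C : CrossedSystem A G)
    (hG : ∀ x y : G, x * y = y * x)
    (hα : ∀ x y : G, C.α x y = 1) (r : G →₀ A) :
    (∀ x : G →₀ A, cmul C r x = cmul C x r) ↔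
      ∀ s : G, (∀ t : G, C.σ t (r s) = r s) ∧
        (∀ a : A, r s * (C.σ s a - a) = 0) := by
  constructor
  · intro h s
    have key : ∀ t : G, ∀ b : A, r s * C.σ s b = b * C.σ t (r s) := by
      intro t b
      have h1 := h (Finsupp.single t b)
      rw [cmul_single_right C hα, cmul_single_left C hG hα] at h1
      have h2 := DFunLike.congr_fun h1 (s * t)
      rw [eval_sum r t s (fun s a => a * C.σ s b) (by simp),
        eval_sum r t s (fun s a => b * C.σ t a) (by simp)] at h2
      exact h2
    have hfix : ∀ t : G, C.σ t (r s) = r s := by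
      intro t
      have := key t 1
      simpa using this.symm
    refine ⟨hfix, fun a => ?_⟩
    have := key s a
    rw [hfix s] at this
    rw [mul_sub, this, mul_comm a (r s), sub_self]
  · intro h x
    unfold cmul
    simp only [hα, Units.val_one, mul_one]
    rw [Finsupp.sum_comm x r
      (fun t b s a => Finsupp.single (t * s) (b * C.σ t a))]
    refine Finsupp.sum_congr fun s hs => ?_
    refine Finsupp.sum_congr fun t _ => ?_
    have h1 : r s * C.σ s (x t) = r s * x t := by
      have := (h s).2 (x t)
      rw [mul_sub, sub_eq_zero] at this
      exact this
    rw [hG s t, h1, (h s).1 t, mul_comm (x t) (r s)]
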